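/- arXiv:1205.5687 — 5 statements merged into one kernel-verified Lean document; each statement's English description precedes it below -/
import Mathlib

section
/- Let u, v be adjacent vertices of a connected graph Γ, with positive Perron vector α and spectral radius λ₀. Suppose that for every vertex w, the u-th column of p₁^w(A) restricted to neighbors equals the weighted adjacency entries (i.e., (p₁^w(A))_{wz} = α_w α_z for z adjacent to w, and the polynomials p_i^w are orthogonal for the w-local inner product). Then for every ℓ ≥ 0, the number of walks of length ℓ from u to v satisfies (A^ℓ)_{uv} = (α_v/α_u)·(1/λ₀)·Σ_{i=0}^d m_u(λ_i) λ_i^{ℓ+1}. -/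
/-!
Write `A = ∑ λ_k E_k`. Then `A ^ ℓ = q(A)` for the interpolant `q` of `x ^ ℓ` at the eigenvalues,
and `q = ∑ c_i p_i^u` since `deg p_i^u = i`. Because `p_i^u(A)_{uv}` vanishes unless
`dist(u, v) = i`, `(A ^ ℓ)_{uv} = c_1 α_u α_v`. On the other hand, orthogonality gives
`⟨p_1^u, x ^ ℓ⟩_u = c_1 ‖p_1^u‖_u² = c_1 α_u² p_1^u(λ₀)`, and as `p_1^u` is a multiple of `x`
this reads `∑ m_u(λ_k) λ_k^{ℓ+1} = c_1 α_u² λ₀`.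
-/

open Matrix Polynomial

theorem Polynomial.exists_eq_sum_C_mul_of_degree_eq {K : Type*} [Field K] {n : ℕ}
    (P : ℕ → K[X]) (hP : ∀ i < n, (P i).degree = i) {f : K[X]} (hf : f.degree < n) :
    ∃ c : Fin n → K, f = ∑ i, C (c i) * P i := by
  classical
  let S : Sequence K := ⟨fun i => if i < n then P i else X ^ i, fun i => by
    split_ifs with hi
    · exact hP i hi
    · exact degree_X_pow i⟩
  have himage : S '' Set.Iio n = Set.range fun i : Fin n => P i := by
    ext g
    constructor
    · rintro ⟨i, hi, rfl⟩
      exact ⟨⟨i, hi⟩, by simp [S, Set.mem_Iio.mp hi]⟩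
    · rintro ⟨i, rfl⟩
      exact ⟨i, i.isLt, by simp [S, i.isLt]⟩
  have hspan : f ∈ Submodule.span K (Set.range fun i : Fin n => P i) := by
    rw [← himage, S.span_degreeLT fun i _ => (leadingCoeff_ne_zero.2 (S.ne_zero i)).isUnit]
    exact mem_degreeLT.2 hf
  obtain ⟨c, hc⟩ := (Submodule.mem_span_range_iff_exists_fun K).1 hspan
  exact ⟨c, by simp only [← hc, smul_eq_C_mul]⟩

namespace CompleteOrthogonalIdempotents

variable {ι R A : Type*} [Fintype ι] [DecidableEq ι] [CommSemiring R] [Semiring A] [Algebra R A]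
  {E : ι → A}

theorem sum_smul_pow (hE : CompleteOrthogonalIdempotents E) (lam : ι → R) (n : ℕ) :
    (∑ i, lam i • E i) ^ n = ∑ i, lam i ^ n • E i := by
  induction n with
  | zero => simpa using hE.complete.symm
  | succ n ih =>
    rw [pow_succ, ih, Finset.sum_mul_sum, Finset.sum_comm]
    refine Finset.sum_congr rfl fun k _ => ?_
    rw [Finset.sum_eq_single k]
    · rw [smul_mul_smul_comm, hE.mul_eq, if_pos rfl, pow_succ]
    · intro j _ hj
      rw [smul_mul_smul_comm, hE.mul_eq, if_neg hj, smul_zero]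
    · simp

theorem aeval_sum_smul (hE : CompleteOrthogonalIdempotents E) (lam : ι → R) (f : R[X]) :
    aeval (∑ i, lam i • E i) f = ∑ i, f.eval (lam i) • E i := by
  induction f using Polynomial.induction_on' with
  | add g h hg hh => simp only [map_add, hg, hh, eval_add, add_smul, Finset.sum_add_distrib]
  | monomial n a =>
    simp only [aeval_monomial, ← Algebra.smul_def, hE.sum_smul_pow, Finset.smul_sum, smul_smul,
      eval_monomial]

end CompleteOrthogonalIdempotents

theorem CompleteOrthogonalIdempotents.exists_pow_eq_sum_smul_aeval {K A : Type*} [Field K]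
    [Ring A] [Algebra K A] {n : ℕ} {E : Fin n → A} (hE : CompleteOrthogonalIdempotents E)
    {lam : Fin n → K} (hlam : Function.Injective lam) (P : ℕ → K[X])
    (hP : ∀ i < n, (P i).degree = i) (ℓ : ℕ) :
    ∃ c : Fin n → K, (∀ k, lam k ^ ℓ = ∑ i, c i * (P i).eval (lam k)) ∧
      (∑ i, lam i • E i) ^ ℓ = ∑ i, c i • aeval (∑ i, lam i • E i) (P i) := by
  set q := Lagrange.interpolate Finset.univ lam fun k => lam k ^ ℓ
  have hinj : Set.InjOn lam (Finset.univ : Finset (Fin n)) := hlam.injOn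
  have hq : ∀ k, q.eval (lam k) = lam k ^ ℓ := fun k =>
    Lagrange.eval_interpolate_at_node _ hinj (Finset.mem_univ k)
  have hqdeg : q.degree < n := by
    simpa only [Finset.card_univ, Fintype.card_fin] using
      Lagrange.degree_interpolate_lt (fun k => lam k ^ ℓ) hinj
  obtain ⟨c, hc⟩ := exists_eq_sum_C_mul_of_degree_eq P hP hqdeg
  refine ⟨c, fun k => by simp [← hq k, hc, eval_finsetSum], ?_⟩
  calc (∑ i, lam i • E i) ^ ℓ = aeval (∑ i, lam i • E i) q := by
        simp only [hE.sum_smul_pow, hE.aeval_sum_smul, hq]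
    _ = ∑ i, c i • aeval (∑ i, lam i • E i) (P i) := by
        simp [hc, Algebra.smul_def]

theorem Finset.sum_mul_sum_eq_mul_of_orthogonal {ι κ R : Type*} [Fintype ι] [Fintype κ]
    [DecidableEq ι] [CommSemiring R] (w : κ → R) (f : ι → κ → R) (c : ι → R) (j : ι)
    (horth : ∀ i ≠ j, ∑ k, w k * f i k * f j k = 0) :
    ∑ k, w k * f j k * ∑ i, c i * f i k = c j * ∑ k, w k * f j k ^ 2 := by
  simp_rw [Finset.mul_sum]
  rw [Finset.sum_comm, Finset.sum_eq_single j]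
  · exact Finset.sum_congr rfl fun k _ => by ring
  · intro i _ hij
    rw [← mul_zero (c i), ← horth i hij, Finset.mul_sum]
    exact Finset.sum_congr rfl fun k _ => by ring
  · simp

namespace SimpleGraph

variable {V : Type*} {G : SimpleGraph V} {u v : V}

theorem adjMatrix_ne_smul_one [DecidableEq V] [DecidableRel G.Adj] {R : Type*} [Semiring R]
    [Nontrivial R] (huv : G.Adj u v) (r : R) : G.adjMatrix R ≠ r • 1 := by
  intro h
  simpa [huv, huv.ne] using congrFun (congrFun h u) v

theorem pos_of_adjMatrix_mulVec_eq_smul [Fintype V] [DecidableRel G.Adj] {R : Type*}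
    [Semiring R] [LinearOrder R] [IsStrictOrderedRing R] {α : V → R} (hpos : ∀ v, 0 < α v) {r : R}
    (heig : G.adjMatrix R *ᵥ α = r • α) (huv : G.Adj u v) : 0 < r := by
  have hle : α v ≤ r * α u :=
    calc α v ≤ ∑ z ∈ G.neighborFinset u, α z :=
          Finset.single_le_sum (fun z _ => (hpos z).le) ((mem_neighborFinset G u v).2 huv)
      _ = r * α u := by rw [← adjMatrix_mulVec_apply, heig, Pi.smul_apply, smul_eq_mul]
  exact pos_of_mul_pos_left ((hpos v).trans_le hle) (hpos u).le

end SimpleGraph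

theorem walks_between_adjacent_vertices_general
    {V : Type*} [Fintype V] [DecidableEq V]
    (G : SimpleGraph V) [DecidableRel G.Adj]
    (d : ℕ) (lam : Fin (d + 1) → ℝ) (hlam : StrictAnti lam)
    (E : Fin (d + 1) → Matrix V V ℝ)
    (hA : G.adjMatrix ℝ = ∑ i, lam i • E i)
    (hidem : ∀ i j, E i * E j = if i = j then E i else 0)
    (hsum : ∑ i, E i = 1)
    (lam0 : ℝ)
    (α : V → ℝ) (hpos : ∀ v, 0 < α v)
    (heig : (G.adjMatrix ℝ).mulVec α = lam0 • α)
    (p : V → ℕ → Polynomial ℝ)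
    (hdeg : ∀ w : V, ∀ i ≤ d, (p w i).natDegree = i)
    (horth : ∀ w : V, ∀ i ≤ d, ∀ j ≤ d, i ≠ j →
      ∑ k, E k w w * (p w i).eval (lam k) * (p w j).eval (lam k) = 0)
    (hnorm : ∀ w : V, ∀ i ≤ d,
      ∑ k, E k w w * (p w i).eval (lam k) ^ 2 = α w ^ 2 * (p w i).eval lam0)
    (hp1 : ∀ w : V, p w 1 = Polynomial.C (α w ^ 2 * lam0 / (G.degree w : ℝ)) * Polynomial.X)
    (hdistcol : ∀ w z : V, ∀ i ≤ d,
      (Polynomial.aeval (G.adjMatrix ℝ) (p w i)) w z =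
        if G.dist w z = i then α w * α z else 0)
    (u v : V) (huv : G.Adj u v) :
    ∀ ℓ : ℕ, ((G.adjMatrix ℝ) ^ ℓ) u v =
      (α v / α u) * (1 / lam0) * ∑ i, E i u u * lam i ^ (ℓ + 1) := by
  intro ℓ
  have hE : CompleteOrthogonalIdempotents E :=
    ⟨⟨fun i => (hidem i i).trans (if_pos rfl), fun i j hij => (hidem i j).trans (if_neg hij)⟩, hsum⟩
  have hd : 1 ≤ d := by
    by_contra! hd
    obtain rfl : d = 0 := by omega
    exact SimpleGraph.adjMatrix_ne_smul_one huv (lam 0) (by simpa [← hsum] using hA)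
  have hpu0 : p u 0 ≠ 0 := fun h => by simpa [h, (hpos u).ne'] using hdistcol u u 0 d.zero_le
  have hpu : ∀ i < d + 1, (p u i).degree = i := by
    rintro (_ | i) hi
    · rw [degree_eq_natDegree hpu0, hdeg u 0 d.zero_le]
    · exact (degree_eq_iff_natDegree_eq_of_pos i.succ_pos).2 (hdeg u _ (by omega))
  obtain ⟨c, hc_eval, hc_pow⟩ := hE.exists_pow_eq_sum_smul_aeval hlam.injective (p u) hpu ℓ
  set i1 : Fin (d + 1) := ⟨1, by omega⟩
  have hwalks : (G.adjMatrix ℝ ^ ℓ) u v = c i1 * (α u * α v) := by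
    have hdist : ∀ i : Fin (d + 1), G.dist u v = i ↔ i = i1 := by
      simp [SimpleGraph.dist_eq_one_iff_adj.2 huv, Fin.ext_iff, i1, eq_comm]
    rw [hA, hc_pow, ← hA]
    simp [Matrix.sum_apply, hdistcol u v _ (Fin.is_le _), hdist]
  have hinner : ∑ k, E k u u * (p u 1).eval (lam k) * lam k ^ ℓ =
      c i1 * (α u ^ 2 * (p u 1).eval lam0) := by
    simp_rw [hc_eval]
    rw [Finset.sum_mul_sum_eq_mul_of_orthogonal _ (fun (i : Fin (d + 1)) k => (p u i).eval (lam k))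
      c i1 fun i hi => horth u i i.is_le 1 hd (Fin.val_ne_iff.2 hi), hnorm u 1 hd]
  simp only [hp1 u, eval_mul, eval_C, eval_X, mul_left_comm _ (_ / _), ← Finset.mul_sum,
    mul_assoc, ← pow_succ'] at hinner
  have hlam0 : 0 < lam0 := SimpleGraph.pos_of_adjMatrix_mulVec_eq_smul hpos heig huv
  have hdeg_pos : (0 : ℝ) < G.degree u := mod_cast G.degree_pos_iff_exists_adj u |>.2 ⟨v, huv⟩
  have hT : ∑ i, E i u u * lam i ^ (ℓ + 1) = α u ^ 2 * lam0 * c i1 := by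
    field_simp at hinner
    exact mul_left_cancel₀ (pow_ne_zero 2 (hpos u).ne') (by linear_combination hinner)
  rw [hwalks, hT]
  field_simp

/-- Let `u, v` be adjacent vertices of a connected graph with positive Perron vector `α`
for the spectral radius `lam0`. Suppose each vertex `w` has a sequence of local
predistance polynomials `p w i` of degree `i`, orthogonal for the `w`-local inner
product `⟨f,g⟩_w = Σ_i m_w(λ_i) f(λ_i) g(λ_i)`, normalized by `‖p_i^w‖² = α_w² p_i^w(λ₀)`,
with `p₁^w = (α_w² λ₀ / δ_w) x` and `(p₁^w(A))_{wz} = α_w α_z` for `z` adjacent to `w`.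
Then for every `ℓ`, `(A^ℓ)_{uv} = (α_v/α_u)(1/λ₀) Σ_i m_u(λ_i) λ_i^{ℓ+1}`. -/
theorem walks_between_adjacent_vertices
    {V : Type*} [Fintype V] [DecidableEq V]
    (G : SimpleGraph V) [DecidableRel G.Adj] (hconn : G.Connected)
    (d : ℕ) (lam : Fin (d + 1) → ℝ) (hlam : StrictAnti lam)
    (E : Fin (d + 1) → Matrix V V ℝ)
    (hA : G.adjMatrix ℝ = ∑ i, lam i • E i)
    (hidem : ∀ i j, E i * E j = if i = j then E i else 0)
    (hsymm : ∀ i, (E i)ᵀ = E i)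
    (hsum : ∑ i, E i = 1)
    (lam0 : ℝ) (hlam0 : lam0 = lam 0)
    (α : V → ℝ) (hpos : ∀ v, 0 < α v)
    (heig : (G.adjMatrix ℝ).mulVec α = lam0 • α)
    (p : V → ℕ → Polynomial ℝ)
    (hdeg : ∀ w : V, ∀ i ≤ d, (p w i).natDegree = i)
    (horth : ∀ w : V, ∀ i ≤ d, ∀ j ≤ d, i ≠ j →
      ∑ k, E k w w * (p w i).eval (lam k) * (p w j).eval (lam k) = 0)
    (hnorm : ∀ w : V, ∀ i ≤ d,
      ∑ k, E k w w * (p w i).eval (lam k) ^ 2 = α w ^ 2 * (p w i).eval lam0)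
    (hp1 : ∀ w : V, p w 1 = Polynomial.C (α w ^ 2 * lam0 / (G.degree w : ℝ)) * Polynomial.X)
    (hp1col : ∀ w z : V, G.Adj w z →
      (Polynomial.aeval (G.adjMatrix ℝ) (p w 1)) w z = α w * α z)
    (hdistcol : ∀ w z : V, ∀ i ≤ d,
      (Polynomial.aeval (G.adjMatrix ℝ) (p w i)) w z =
        if G.dist w z = i then α w * α z else 0)
    (u v : V) (huv : G.Adj u v) :
    ∀ ℓ : ℕ, ((G.adjMatrix ℝ) ^ ℓ) u v =
      (α v / α u) * (1 / lam0) * ∑ i, E i u u * lam i ^ (ℓ + 1) :=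
  walks_between_adjacent_vertices_general G d lam hlam E hA hidem hsum lam0 α hpos heig p hdeg horth
    hnorm hp1 hdistcol u v huv
end

section
/- Let Γ be a connected graph and u a vertex with distinct eigenvalues of Γ having nonzero u-local multiplicity μ₀,…,μ_{d_u}. Then the eccentricity of u is at most d_u, i.e., ecc(u) ≤ d_u. -/
open Matrix Polynomial

/-- The eccentricity of a vertex `u` of a connected graph is at most `d_u`, where
`d_u + 1` is the number of eigenvalues with nonzero `u`-local multiplicity; that is,
`dist(u,v) + 1 ≤ d_u + 1` for every vertex `v`. -/
theorem eccentricity_le_local_spectrum_card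
    {V : Type*} [Fintype V] [DecidableEq V]
    (G : SimpleGraph V) [DecidableRel G.Adj] (hconn : G.Connected)
    (d : ℕ) (lam : Fin (d + 1) → ℝ) (hlam : StrictAnti lam)
    (E : Fin (d + 1) → Matrix V V ℝ)
    (hA : G.adjMatrix ℝ = ∑ i, lam i • E i)
    (hidem : ∀ i j, E i * E j = if i = j then E i else 0)
    (hsymm : ∀ i, (E i)ᵀ = E i)
    (hsum : ∑ i, E i = 1)
    (u : V) :
    ∀ v : V, G.dist u v + 1 ≤ (Finset.univ.filter fun i => E i u u ≠ 0).card := by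
  intro v
  set S : Finset (Fin (d + 1)) := Finset.univ.filter fun i => E i u u ≠ 0 with hS
  set k : ℕ := G.dist u v with hk
  by_contra hcon
  push_neg at hcon
  have hsk : S.card ≤ k := Nat.lt_succ_iff.mp hcon
  -- columns of E i at u vanish if diagonal vanishes
  have hcol : ∀ i, E i u u = 0 → ∀ w, E i u w = 0 := by
    intro i hi w
    have h1 : (E i * E i) u u = E i u u := by rw [hidem i i]; simp
    have h2 : ∑ x, E i u x * E i x u = 0 := by
      rw [← Matrix.mul_apply, h1, hi]
    have h3 : ∀ x, E i u x * E i x u = E i u x ^ 2 := by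
      intro x
      have := congrFun (congrFun (hsymm i) u) x
      simp [Matrix.transpose_apply] at this
      rw [this]; ring
    have h4 : ∑ x, E i u x ^ 2 = 0 := by
      rw [← h2]; exact Finset.sum_congr rfl fun x _ => (h3 x).symm
    have h5 := Finset.sum_eq_zero_iff_of_nonneg
      (fun x _ => sq_nonneg (E i u x)) |>.mp h4 w (Finset.mem_univ w)
    exact pow_eq_zero_iff (two_ne_zero) |>.mp h5
  -- powers
  have hpow : ∀ n : ℕ, G.adjMatrix ℝ ^ n = ∑ i, (lam i) ^ n • E i := by
    intro n
    induction n with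
    | zero => simpa using hsum.symm
    | succ n ih =>
      rw [pow_succ, ih, hA, Finset.sum_mul_sum]
      rw [Finset.sum_comm]
      refine Finset.sum_congr rfl fun i _ => ?_
      rw [Finset.sum_eq_single i]
      · rw [Matrix.smul_mul, Matrix.mul_smul, hidem i i, if_pos rfl, smul_smul,
          pow_succ]
      · intro j _ hj
        rw [Matrix.smul_mul, Matrix.mul_smul, hidem j i, if_neg hj]
        simp
      · simp
  -- aeval
  have haeval : ∀ p : ℝ[X], aeval (G.adjMatrix ℝ) p = ∑ i, p.eval (lam i) • E i := by
    intro p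
    rw [aeval_eq_sum_range]
    simp_rw [eval_eq_sum_range, Finset.sum_smul, hpow, Finset.smul_sum, smul_smul]
    exact Finset.sum_comm
  -- the polynomial
  set q : ℝ[X] := ∏ i ∈ S, (X - C (lam i)) with hq
  set p : ℝ[X] := q * X ^ (k - S.card) with hp
  have hqm : q.Monic := monic_prod_of_monic _ _ fun i _ => monic_X_sub_C _
  have hpm : p.Monic := hqm.mul (monic_X_pow _)
  have hqdeg : q.natDegree = S.card := by
    rw [hq, natDegree_prod _ _ fun i _ => X_sub_C_ne_zero _]
    simp
  have hpdeg : p.natDegree = k := by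
    rw [hp, natDegree_mul hqm.ne_zero (pow_ne_zero _ X_ne_zero), hqdeg, natDegree_X_pow]
    omega
  have heval0 : ∀ i, p.eval (lam i) • (E i u v) = 0 := by
    intro i
    by_cases hi : i ∈ S
    · have : p.eval (lam i) = 0 := by
        rw [hp, hq]
        simp only [eval_mul, eval_prod, eval_pow, eval_X, eval_sub, eval_C]
        rw [Finset.prod_eq_zero hi (by ring)]
        ring
      rw [this]; simp
    · have hi0 : E i u u = 0 := by
        by_contra h
        exact hi (Finset.mem_filter.mpr ⟨Finset.mem_univ i, h⟩)
      rw [hcol i hi0 v]; simp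
  have hzero : (aeval (G.adjMatrix ℝ) p) u v = 0 := by
    rw [haeval p, Matrix.sum_apply]
    exact Finset.sum_eq_zero fun i _ => by rw [Matrix.smul_apply]; exact heval0 i
  -- walk counts
  have hwalk : ∀ n : ℕ, ((G.adjMatrix ℝ) ^ n) u v =
      (Fintype.card {p : G.Walk u v // p.length = n} : ℝ) := by
    intro n
    exact_mod_cast SimpleGraph.adjMatrix_pow_apply_eq_card_walk n u v
  have hAn0 : ∀ n < k, ((G.adjMatrix ℝ) ^ n) u v = 0 := by
    intro n hn
    rw [hwalk n]
    norm_cast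
    rw [Fintype.card_eq_zero_iff]
    constructor
    rintro ⟨w, hw⟩
    have := SimpleGraph.dist_le w
    omega
  have hAk : ((G.adjMatrix ℝ) ^ k) u v ≠ 0 := by
    rw [hwalk k]
    obtain ⟨w, hw⟩ := hconn.exists_walk_length_eq_dist u v
    have h0 : 0 < Fintype.card {p : G.Walk u v // p.length = k} :=
      Fintype.card_pos_iff.mpr ⟨⟨w, hw⟩⟩
    have := h0.ne'
    exact_mod_cast this
  -- compute entry via coefficients
  have hent : (aeval (G.adjMatrix ℝ) p) u v = ((G.adjMatrix ℝ) ^ k) u v := by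
    rw [aeval_eq_sum_range, Matrix.sum_apply]
    rw [hpdeg]
    rw [Finset.sum_range_succ]
    have h1 : ∀ n ∈ Finset.range k, (p.coeff n • (G.adjMatrix ℝ) ^ n) u v = 0 := by
      intro n hn
      rw [Matrix.smul_apply, hAn0 n (Finset.mem_range.mp hn)]
      simp
    rw [Finset.sum_eq_zero h1, zero_add, Matrix.smul_apply]
    have : p.coeff k = 1 := by
      have := hpm.coeff_natDegree
      rwa [hpdeg] at this
    rw [this, one_smul]
  exact hAk (hent ▸ hzero)
end

section
/- For a vertex u of a connected graph Γ, the dimension of the vector space spanned by the u-th columns of the powers A^ℓ (ℓ ≥ 0) of the adjacency matrix equals d_u + 1, the number of eigenvalues of A with nonzero u-local multiplicity. -/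
open Matrix

/-- For a vertex `u` of a connected graph, the dimension of the span of the
`u`-columns of the powers of the adjacency matrix, `span {A^ℓ e_u : ℓ ≥ 0}`, equals
`d_u + 1`, the number of eigenvalues with nonzero `u`-local multiplicity. -/
theorem dim_krylov_space_eq_local_spectrum_card
    {V : Type*} [Fintype V] [DecidableEq V]
    (G : SimpleGraph V) [DecidableRel G.Adj] (hconn : G.Connected)
    (d : ℕ) (lam : Fin (d + 1) → ℝ) (hlam : StrictAnti lam)
    (E : Fin (d + 1) → Matrix V V ℝ)
    (hA : G.adjMatrix ℝ = ∑ i, lam i • E i)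
    (hidem : ∀ i j, E i * E j = if i = j then E i else 0)
    (hsymm : ∀ i, (E i)ᵀ = E i)
    (hsum : ∑ i, E i = 1)
    (u : V) :
    Module.finrank ℝ (Submodule.span ℝ
        (Set.range fun ℓ : ℕ => ((G.adjMatrix ℝ) ^ ℓ).mulVec (Pi.single u 1))) =
      (Finset.univ.filter fun i => E i u u ≠ 0).card := by
  classical
  set A := G.adjMatrix ℝ with hAdef
  set v : Fin (d + 1) → (V → ℝ) := fun i => (E i).mulVec (Pi.single u 1) with hv
  -- entries of v
  have hvw : ∀ i w, v i w = E i w u := by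
    intro i w; simp [hv, Matrix.mulVec_single]
  -- powers of A
  have hpow : ∀ ℓ : ℕ, A ^ ℓ = ∑ i, (lam i ^ ℓ) • E i := by
    intro ℓ
    induction ℓ with
    | zero => simp [hsum]
    | succ n ih =>
      calc A ^ (n + 1) = (∑ i, (lam i ^ n) • E i) * (∑ j, lam j • E j) := by
            rw [pow_succ, ih, ← hA]
        _ = ∑ i, ∑ j, (lam i ^ n * lam j) • (E i * E j) := by
            rw [Finset.sum_mul]
            refine Finset.sum_congr rfl fun i _ => ?_
            rw [Finset.mul_sum]
            exact Finset.sum_congr rfl fun j _ => smul_mul_smul_comm _ _ _ _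
        _ = ∑ i, (lam i ^ (n + 1)) • E i := by
            refine Finset.sum_congr rfl fun i _ => ?_
            simp only [hidem, smul_ite, smul_zero]
            rw [Finset.sum_ite_eq]
            simp [pow_succ]
  -- the generators
  have hgen : ∀ ℓ : ℕ, (A ^ ℓ).mulVec (Pi.single u 1) = ∑ i, (lam i ^ ℓ) • v i := by
    intro ℓ
    rw [hpow ℓ]
    funext w
    simp [Matrix.mulVec_single, Matrix.sum_apply, Finset.sum_apply, hvw]
  -- span equality with span of v's
  have hspan : Submodule.span ℝ
      (Set.range fun ℓ : ℕ => (A ^ ℓ).mulVec (Pi.single u 1)) =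
      Submodule.span ℝ (Set.range v) := by
    apply le_antisymm
    · rw [Submodule.span_le]
      rintro _ ⟨ℓ, rfl⟩
      dsimp only
      rw [hgen]
      exact Submodule.sum_mem _ fun i _ =>
        Submodule.smul_mem _ _ (Submodule.subset_span ⟨i, rfl⟩)
    · rw [Submodule.span_le]
      rintro _ ⟨i, rfl⟩
      -- Vandermonde argument
      have hdet : (Matrix.vandermonde lam).det ≠ 0 :=
        Matrix.det_vandermonde_ne_zero_iff.mpr hlam.injective
      set W := Matrix.vandermonde lam with hW
      set c : Fin (d + 1) → ℝ := W⁻¹.mulVec (Pi.single i 1) with hc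
      have hWc : W.mulVec c = Pi.single i 1 := by
        rw [hc, Matrix.mulVec_mulVec, Matrix.mul_nonsing_inv _ (isUnit_iff_ne_zero.mpr hdet),
          Matrix.one_mulVec]
      have hsolve : ∀ j, ∑ ℓ : Fin (d + 1), c ℓ * lam j ^ ℓ.val =
          if j = i then (1 : ℝ) else 0 := by
        intro j
        have h0 := congrFun hWc j
        rw [Matrix.mulVec, dotProduct] at h0
        simp only [hW, Matrix.vandermonde, Matrix.of_apply] at h0
        have h2 : ∑ ℓ : Fin (d + 1), c ℓ * lam j ^ ℓ.val = (Pi.single i 1 : Fin (d + 1) → ℝ) j := by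
          rw [← h0]
          exact Finset.sum_congr rfl fun ℓ _ => mul_comm _ _
        rw [h2, Pi.single_apply]
      have hvi : v i = ∑ ℓ : Fin (d + 1), c ℓ • (A ^ ℓ.val).mulVec (Pi.single u 1) := by
        have : ∑ ℓ : Fin (d + 1), c ℓ • (A ^ ℓ.val).mulVec (Pi.single u 1) =
            ∑ j, (∑ ℓ : Fin (d + 1), c ℓ * lam j ^ ℓ.val) • v j := by
          simp_rw [hgen, Finset.smul_sum]
          rw [Finset.sum_comm]
          refine Finset.sum_congr rfl fun j _ => ?_
          rw [Finset.sum_smul]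
          exact Finset.sum_congr rfl fun ℓ _ => (smul_smul _ _ _)
        rw [this]
        simp_rw [hsolve]
        simp [Finset.sum_ite_eq']
      rw [hvi]
      exact Submodule.sum_mem _ fun ℓ _ =>
        Submodule.smul_mem _ _ (Submodule.subset_span ⟨ℓ.val, rfl⟩)
  rw [hspan]
  -- dot products
  have hdot : ∀ i j, v i ⬝ᵥ v j = if i = j then E i u u else 0 := by
    intro i j
    have h1 : v i ⬝ᵥ v j = (E i * E j) u u := by
      rw [dotProduct, Matrix.mul_apply]
      refine Finset.sum_congr rfl fun w _ => ?_
      rw [hvw, hvw]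
      congr 1
      conv_lhs => rw [← hsymm i]
      rfl
    rw [h1, hidem]
    split <;> simp [Matrix.zero_apply]
  -- v i vanishes when E i u u = 0
  have hvzero : ∀ i, E i u u = 0 → v i = 0 := by
    intro i h
    have : v i ⬝ᵥ v i = 0 := by rw [hdot]; simp [h]
    exact dotProduct_self_eq_zero.mp this
  -- linear independence of the nonzero ones
  set S : Set (Fin (d + 1)) := {i | E i u u ≠ 0} with hS
  set b : S → (V → ℝ) := fun i => v i.val with hb
  have hli : LinearIndependent ℝ b := by
    rw [Fintype.linearIndependent_iff]
    intro g hg j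
    have hzd : ∀ i : S, (g i • b i) ⬝ᵥ v j.val = g i • (b i ⬝ᵥ v j.val) :=
      fun i => smul_dotProduct _ _ _
    have this : ∑ i : S, g i • (b i ⬝ᵥ v j.val) = 0 := by
      have h4 : (∑ i : S, g i • b i) ⬝ᵥ v j.val = ∑ i : S, g i • (b i ⬝ᵥ v j.val) := by
        simp only [dotProduct, Finset.sum_apply, Pi.smul_apply, smul_eq_mul,
          Finset.sum_mul, Finset.mul_sum, mul_assoc]
        exact Finset.sum_comm
      rw [← h4, hg, zero_dotProduct]
    have heq : ∀ i : S, g i • (b i ⬝ᵥ v j.val) =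
        if i = j then g j * E j.val u u else 0 := by
      intro i
      rw [hb, hdot]
      rcases eq_or_ne i j with rfl | hne
      · simp [Subtype.ext_iff.symm]
      · have : i.val ≠ j.val := fun h => hne (Subtype.ext h)
        simp [this, hne]
    rw [Finset.sum_congr rfl fun i _ => heq i, Finset.sum_ite_eq' Finset.univ j] at this
    simp only [Finset.mem_univ, if_true] at this
    exact (mul_eq_zero.mp this).resolve_right j.prop
  -- span of v = span of b
  have hspan2 : Submodule.span ℝ (Set.range v) = Submodule.span ℝ (Set.range b) := by
    apply le_antisymm
    · rw [Submodule.span_le]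
      rintro _ ⟨i, rfl⟩
      by_cases h : E i u u = 0
      · rw [hvzero i h]; exact Submodule.zero_mem _
      · exact Submodule.subset_span ⟨⟨i, h⟩, rfl⟩
    · rw [Submodule.span_le]
      rintro _ ⟨i, rfl⟩
      exact Submodule.subset_span ⟨i.val, rfl⟩
  rw [hspan2, finrank_span_eq_card hli]
  rw [Fintype.card_subtype]
  rfl
end

section
/- (Main theorem) Every connected graph that is pseudo-distance-regular around each of its vertices is either distance-regular or distance-biregular. -/
/-!
Positivity of `α` and pseudo-regularity around `u` for `j = 0` force all neighbours of `u` to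
have the same weight. Hence `α` is constant on the vertices at even distance from a fixed vertex
and on those at odd distance: either `α` is constant, or it takes two values and its level sets
are the colour classes of a bipartition. As `α` is constant on every layer of every distance
partition, the intersection numbers around `u` are the pseudo-intersection numbers of `u` up to a
ratio of weights, so it suffices to show that `α u = α u'` forces `u` and `u'` to have the same
pseudo-intersection numbers.

The ratio `(A ^ ℓ) u w / (α u * α w)` depends only on `ℓ` and on the layer `i` of `w`, and obeys
the three-term recursion in `ℓ` given by the pseudo-intersection numbers of `u`. It is symmetric
in `u` and `w`, and for `w = u` the recursion expresses it through its value at a neighbour, so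
the normalised numbers of closed walks `(A ^ ℓ) u u / α u ^ 2` do not depend on `u` for `ℓ ≥ 1`.
A tridiagonal array with nonzero off-diagonal entries and row sums `λ` is determined by this
moment sequence: row `i` and column `i + 1` of the walk numbers are read off alternately.
-/

open Finset

variable {V : Type*} [Fintype V] [DecidableEq V]

/-- `Γ` is pseudo-distance-regular around `u` (with respect to the Perron weights `α`)
if the weighted numbers `(1/α_w) Σ_{z ∈ Γ(w) ∩ Γ_j(u)} α_z` depend only on
`dist(u,w)` and `j`. -/
def PseudoDistanceRegularAround (G : SimpleGraph V) [DecidableRel G.Adj]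
    (α : V → ℝ) (u : V) : Prop :=
  ∀ w z : V, G.dist u w = G.dist u z → ∀ j : ℕ,
    (1 / α w) * ∑ y ∈ (G.neighborFinset w).filter (fun y => G.dist u y = j), α y =
    (1 / α z) * ∑ y ∈ (G.neighborFinset z).filter (fun y => G.dist u y = j), α y

/-- `Γ` is distance-regular if the intersection numbers `a_i`, `b_i`, `c_i` of the
distance partition around any vertex are independent of the base vertex. -/
def IsDistanceRegular (G : SimpleGraph V) [DecidableRel G.Adj] : Prop :=
  ∃ a b c : ℕ → ℕ, ∀ u v : V,
    ((G.neighborFinset v).filter (fun y => G.dist u y = G.dist u v)).card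
        = a (G.dist u v) ∧
    ((G.neighborFinset v).filter (fun y => G.dist u y = G.dist u v + 1)).card
        = b (G.dist u v) ∧
    ((G.neighborFinset v).filter (fun y => G.dist u y + 1 = G.dist u v)).card
        = c (G.dist u v)

/-- `Γ` is distance-biregular if it is bipartite and the intersection numbers of the
distance partition around a base vertex depend only on the partite set of that vertex. -/
def IsDistanceBiregular (G : SimpleGraph V) [DecidableRel G.Adj] : Prop :=
  ∃ V₁ V₂ : Set V,
    (∀ v : V, v ∈ V₁ ∨ v ∈ V₂) ∧ Disjoint V₁ V₂ ∧
    (∀ u v : V, G.Adj u v → (u ∈ V₁ ∧ v ∈ V₂) ∨ (u ∈ V₂ ∧ v ∈ V₁)) ∧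
    ∃ b₁ c₁ b₂ c₂ : ℕ → ℕ,
      (∀ u ∈ V₁, ∀ v : V,
        ((G.neighborFinset v).filter (fun y => G.dist u y = G.dist u v + 1)).card
            = b₁ (G.dist u v) ∧
        ((G.neighborFinset v).filter (fun y => G.dist u y + 1 = G.dist u v)).card
            = c₁ (G.dist u v)) ∧
      (∀ u ∈ V₂, ∀ v : V,
        ((G.neighborFinset v).filter (fun y => G.dist u y = G.dist u v + 1)).card
            = b₂ (G.dist u v) ∧
        ((G.neighborFinset v).filter (fun y => G.dist u y + 1 = G.dist u v)).card
            = c₂ (G.dist u v))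

theorem Finset.eq_of_sum_eq_of_forall_ne {ι M : Type*} [DecidableEq ι] [AddCancelCommMonoid M]
    {s : Finset ι} {f g : ι → M} {k : ι} (hk : k ∈ s) (hfg : ∑ i ∈ s, f i = ∑ i ∈ s, g i)
    (h : ∀ i ∈ s, i ≠ k → f i = g i) : f k = g k := by
  rw [← add_sum_erase s f hk, ← add_sum_erase s g hk,
    sum_congr rfl fun i hi => h i (mem_of_mem_erase hi) (ne_of_mem_erase hi)] at hfg
  exact add_right_cancel hfg

noncomputable def layerWalks (b : ℕ → ℕ → ℝ) (c : ℝ) : ℕ → ℕ → ℝ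
  | 0, i => if i = 0 then c else 0
  | ℓ + 1, i => ∑ j ∈ range (i + 2), b i j * layerWalks b c ℓ j

/-- `b i j` is the weight passed from layer `i` to layer `j`; the nonempty layers are those
satisfying `L`. -/
structure IsTridiagonalArray (b : ℕ → ℕ → ℝ) (L : ℕ → Prop) (lam : ℝ) : Prop where
  eq_zero_above : ∀ i j, i + 2 ≤ j → b i j = 0
  eq_zero_below : ∀ i j, j + 2 ≤ i → b i j = 0
  layer_zero : L 0
  layer_succ_iff : ∀ i, L (i + 1) ↔ b i (i + 1) ≠ 0
  eq_zero_of_not_layer : ∀ i j, ¬ L i → b i j = 0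
  ne_zero_of_layer_succ : ∀ i, L (i + 1) → b (i + 1) i ≠ 0
  sum_eq : ∀ i, L i → ∑ j ∈ range (i + 2), b i j = lam

theorem layerWalks_eq_zero_of_lt {b : ℕ → ℕ → ℝ} {c : ℝ} (hbelow : ∀ i j, j + 2 ≤ i → b i j = 0)
    {ℓ i : ℕ} (h : ℓ < i) : layerWalks b c ℓ i = 0 := by
  induction ℓ generalizing i with
  | zero => simp [layerWalks, Nat.pos_iff_ne_zero.1 h]
  | succ ℓ ih =>
    refine sum_eq_zero fun j _ => ?_
    rcases le_or_gt (j + 2) i with hj | hj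
    · rw [hbelow i j hj, zero_mul]
    · rw [ih (by omega), mul_zero]

namespace IsTridiagonalArray

variable {b b' : ℕ → ℕ → ℝ} {L L' : ℕ → Prop} {lam c : ℝ}

theorem layer_of_layer_succ (hb : IsTridiagonalArray b L lam) {i : ℕ} (h : L (i + 1)) : L i :=
  by_contra fun hi => (hb.layer_succ_iff i).1 h (hb.eq_zero_of_not_layer i _ hi)

theorem layerWalks_eq_zero_of_not_layer (hb : IsTridiagonalArray b L lam) {i : ℕ} (hi : ¬ L i)
    (ℓ : ℕ) : layerWalks b c ℓ i = 0 := by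
  cases ℓ with
  | zero =>
    have hi0 : i ≠ 0 := by rintro rfl; exact hi hb.layer_zero
    simp [layerWalks, hi0]
  | succ ℓ => simp [layerWalks, hb.eq_zero_of_not_layer i _ hi]

theorem layerWalks_succ_self (hb : IsTridiagonalArray b L lam) (i : ℕ) :
    layerWalks b c (i + 1) (i + 1) = b (i + 1) i * layerWalks b c i i := by
  refine sum_eq_single i (fun j _ hji => ?_) fun h => absurd (mem_range.2 (by omega)) h
  rcases lt_or_gt_of_ne hji with h | h
  · rw [hb.eq_zero_below _ _ (by omega), zero_mul]
  · rw [layerWalks_eq_zero_of_lt hb.eq_zero_below h, mul_zero]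

theorem layerWalks_succ_zero (hb : IsTridiagonalArray b L lam) (h₀ : b 0 0 = 0) (ℓ : ℕ) :
    layerWalks b c (ℓ + 1) 0 = lam * layerWalks b c ℓ 1 := by
  have hsum := hb.sum_eq 0 hb.layer_zero
  simp only [sum_range_succ, range_zero, sum_empty, h₀, zero_add] at hsum
  simp [layerWalks, sum_range_succ, h₀, hsum]

theorem layer_iff_layerWalks_ne_zero (hb : IsTridiagonalArray b L lam) (hc : c ≠ 0) (i : ℕ) :
    L i ↔ layerWalks b c i i ≠ 0 := by
  induction i with
  | zero => exact iff_of_true hb.layer_zero (by simpa [layerWalks] using hc)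
  | succ i ih =>
    rw [hb.layerWalks_succ_self]
    refine ⟨fun h => mul_ne_zero (hb.ne_zero_of_layer_succ i h)
      (ih.1 (hb.layer_of_layer_succ h)), fun h => by_contra fun hi => h ?_⟩
    rw [hb.eq_zero_of_not_layer _ i hi, zero_mul]

theorem apply_succ_self_eq (hb : IsTridiagonalArray b L lam) (hb' : IsTridiagonalArray b' L' lam)
    (hc : c ≠ 0) {i : ℕ} (hi : L i)
    (h₁ : layerWalks b c (i + 1) (i + 1) = layerWalks b' c (i + 1) (i + 1))
    (h₀ : layerWalks b c i i = layerWalks b' c i i) : b (i + 1) i = b' (i + 1) i := by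
  rw [hb.layerWalks_succ_self, hb'.layerWalks_succ_self, h₀] at h₁
  exact mul_right_cancel₀ (h₀ ▸ (hb.layer_iff_layerWalks_ne_zero hc i).1 hi) h₁

theorem row_eq_of_layerWalks_eq (hb : IsTridiagonalArray b L lam)
    (hb' : IsTridiagonalArray b' L' lam) (hc : c ≠ 0) {i : ℕ}
    (hcol : ∀ k ≤ i, ∀ ℓ, layerWalks b c ℓ k = layerWalks b' c ℓ k) : b i = b' i := by
  have hL : L i ↔ L' i := by
    rw [hb.layer_iff_layerWalks_ne_zero hc, hb'.layer_iff_layerWalks_ne_zero hc, hcol i le_rfl]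
  by_cases hi : L i
  swap
  · funext j
    rw [hb.eq_zero_of_not_layer i j hi, hb'.eq_zero_of_not_layer i j (hL.not.1 hi)]
  have hs : layerWalks b c i i ≠ 0 := (hb.layer_iff_layerWalks_ne_zero hc i).1 hi
  have hbelow : ∀ j < i, b i j = b' i j := by
    intro j hj
    obtain hj2 | rfl : j + 2 ≤ i ∨ i = j + 1 := by omega
    · rw [hb.eq_zero_below _ _ hj2, hb'.eq_zero_below _ _ hj2]
    · exact hb.apply_succ_self_eq hb' hc (hb.layer_of_layer_succ hi) (hcol _ le_rfl _)
        (hcol j (by omega) j)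
  have hdiag : b i i = b' i i := by
    have hrec := hcol i le_rfl (i + 1)
    simp only [layerWalks] at hrec
    have := eq_of_sum_eq_of_forall_ne (k := i) (by simp) hrec fun j _ hji => by
      rcases lt_or_gt_of_ne hji with h | h
      · rw [hbelow j h, hcol j h.le i]
      · rw [layerWalks_eq_zero_of_lt hb.eq_zero_below h,
          layerWalks_eq_zero_of_lt hb'.eq_zero_below h, mul_zero, mul_zero]
    rw [hcol i le_rfl i] at this
    exact mul_right_cancel₀ (hcol i le_rfl i ▸ hs) this
  have habove : b i (i + 1) = b' i (i + 1) := by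
    refine eq_of_sum_eq_of_forall_ne (by simp)
      ((hb.sum_eq i hi).trans (hb'.sum_eq i (hL.1 hi)).symm) fun j hj hji => ?_
    obtain h | rfl : j < i ∨ j = i := by have := mem_range.1 hj; omega
    exacts [hbelow j h, hdiag]
  funext j
  obtain h | rfl | rfl | h : j < i ∨ j = i ∨ j = i + 1 ∨ i + 2 ≤ j := by omega
  · exact hbelow j h
  · exact hdiag
  · exact habove
  · rw [hb.eq_zero_above _ _ h, hb'.eq_zero_above _ _ h]

theorem layerWalks_succ_eq_of_row_eq (hb : IsTridiagonalArray b L lam)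
    (hb' : IsTridiagonalArray b' L' lam) {i : ℕ} (hrow : b i = b' i)
    (hcol : ∀ k ≤ i, ∀ ℓ, layerWalks b c ℓ k = layerWalks b' c ℓ k) (ℓ : ℕ) :
    layerWalks b c ℓ (i + 1) = layerWalks b' c ℓ (i + 1) := by
  by_cases hi : L (i + 1)
  · have hrec := hcol i le_rfl (ℓ + 1)
    simp only [layerWalks, hrow] at hrec
    refine mul_left_cancel₀ (hrow ▸ (hb.layer_succ_iff i).1 hi) ?_
    exact eq_of_sum_eq_of_forall_ne (by simp) hrec fun j hj _ => by
      rw [hcol j (by simp at hj; omega) ℓ]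
  · have hi' : ¬ L' (i + 1) := by rwa [hb'.layer_succ_iff, ← hrow, ← hb.layer_succ_iff]
    rw [hb.layerWalks_eq_zero_of_not_layer hi, hb'.layerWalks_eq_zero_of_not_layer hi']

theorem eq_of_layerWalks_zero_eq (hb : IsTridiagonalArray b L lam)
    (hb' : IsTridiagonalArray b' L' lam) (hc : c ≠ 0)
    (hmom : ∀ ℓ, layerWalks b c ℓ 0 = layerWalks b' c ℓ 0) : b = b' := by
  have hcol : ∀ i, ∀ k ≤ i, ∀ ℓ, layerWalks b c ℓ k = layerWalks b' c ℓ k := by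
    intro i
    induction i with
    | zero => intro k hk; rw [Nat.le_zero.1 hk]; exact hmom
    | succ i ih =>
      intro k hk
      obtain hk | rfl := Nat.lt_or_eq_of_le hk
      · exact ih k (by omega)
      · exact hb.layerWalks_succ_eq_of_row_eq hb' (hb.row_eq_of_layerWalks_eq hb' hc ih) ih
  funext i
  exact hb.row_eq_of_layerWalks_eq hb' hc (hcol i)

end IsTridiagonalArray

namespace SimpleGraph

variable {W : Type*} {G : SimpleGraph W}

theorem exists_adj_dist_eq_of_dist_eq_succ {u x : W} {i : ℕ} (h : G.dist u x = i + 1) :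
    ∃ z, G.Adj z x ∧ G.dist u z = i := by
  obtain ⟨p, hp⟩ := exists_walk_of_dist_ne_zero (h ▸ i.succ_ne_zero : G.dist u x ≠ 0)
  have hadj := p.adj_penultimate (Walk.not_nil_iff_lt_length.2 (by omega))
  have hlen : p.dropLast.length + 1 = p.length := by
    rw [← Walk.length_concat _ hadj, Walk.concat_dropLast]
  have := dist_le p.dropLast
  refine ⟨p.penultimate, hadj, ?_⟩
  rcases hadj.diff_dist_adj (u := u) with h' | h' | h' <;> omega

variable {α : W → ℝ}

theorem Walk.alpha_eq_of_even_length (hnbr : ∀ ⦃u w z⦄, G.Adj u w → G.Adj u z → α w = α z) :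
    ∀ {x y : W} (p : G.Walk x y), Even p.length → α x = α y
  | _, _, .nil, _ => rfl
  | _, _, .cons _ .nil, hp => by simp at hp
  | _, _, .cons h (.cons h' q), hp =>
    (hnbr h.symm h').trans (alpha_eq_of_even_length hnbr q (by simpa [parity_simps] using hp))

theorem alpha_eq_or_alpha_eq_of_adj (hnbr : ∀ ⦃u w z⦄, G.Adj u w → G.Adj u z → α w = α z)
    (hconn : G.Connected) {x y : W} (hxy : G.Adj x y) (w : W) :
    α w = α x ∨ α w = α y := by
  obtain ⟨p⟩ := hconn x w
  rcases Nat.even_or_odd p.length with hp | hp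
  · exact .inl (p.alpha_eq_of_even_length hnbr hp).symm
  · refine .inr ((Walk.cons hxy.symm p).alpha_eq_of_even_length hnbr ?_).symm
    simpa [parity_simps] using hp

theorem alpha_eq_of_adj_of_alpha_eq (hnbr : ∀ ⦃u w z⦄, G.Adj u w → G.Adj u z → α w = α z)
    (hconn : G.Connected) {x x' y y' : W} (h : α x = α x') (hxy : G.Adj x y)
    (hxy' : G.Adj x' y') : α y = α y' := by
  rcases alpha_eq_or_alpha_eq_of_adj hnbr hconn hxy y' with h' | h'
  · rcases alpha_eq_or_alpha_eq_of_adj hnbr hconn hxy' y with h'' | h''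
    · rw [h'', h', h]
    · exact h''
  · exact h'.symm

theorem alpha_eq_iff_alpha_ne_of_adj (hnbr : ∀ ⦃u w z⦄, G.Adj u w → G.Adj u z → α w = α z)
    (hconn : G.Connected) {x y u v : W} (hxy : G.Adj x y) (hne : α x ≠ α y) (huv : G.Adj u v) :
    α u = α x ↔ α v ≠ α x := by
  refine ⟨fun hu hv => hne ((alpha_eq_of_adj_of_alpha_eq hnbr hconn hu.symm hxy huv).trans hv).symm,
    fun hv => by_contra fun hu => hv ?_⟩
  have hu : α y = α u := ((alpha_eq_or_alpha_eq_of_adj hnbr hconn hxy u).resolve_left hu).symm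
  exact (alpha_eq_of_adj_of_alpha_eq hnbr hconn hu hxy.symm huv).symm

theorem Walk.alpha_eq_of_length_eq (hnbr : ∀ ⦃u w z⦄, G.Adj u w → G.Adj u z → α w = α z)
    (hconn : G.Connected) {x x' y y' : W} (h : α x = α x') (p : G.Walk x y)
    (p' : G.Walk x' y') (hlen : p.length = p'.length) : α y = α y' := by
  induction p generalizing x' with
  | nil => cases p' with
    | nil => exact h
    | cons => simp at hlen
  | cons hxz q ih => cases p' with
    | nil => simp at hlen
    | cons hxz' q' =>
      exact ih (alpha_eq_of_adj_of_alpha_eq hnbr hconn h hxz hxz') q' (by simpa using hlen)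

theorem alpha_eq_of_dist_eq (hnbr : ∀ ⦃u w z⦄, G.Adj u w → G.Adj u z → α w = α z)
    (hconn : G.Connected) {u u' v v' : W} (h : α u = α u') (hd : G.dist u v = G.dist u' v') :
    α v = α v' := by
  obtain ⟨p, hp⟩ := (hconn u v).exists_walk_length_eq_dist
  obtain ⟨p', hp'⟩ := (hconn u' v').exists_walk_length_eq_dist
  exact p.alpha_eq_of_length_eq hnbr hconn h p' (by rw [hp, hp', hd])

variable [Fintype W] [DecidableRel G.Adj]

theorem alpha_eq_of_adj_of_adj (hpos : ∀ v, 0 < α v)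
    (hpdr : ∀ u, PseudoDistanceRegularAround G α u) ⦃u w z : W⦄ (hw : G.Adj u w)
    (hz : G.Adj u z) : α w = α z := by
  have hfilter : ∀ x, G.Adj u x → {y ∈ G.neighborFinset x | G.dist u y = 0} = {u} := by
    intro x hx
    ext y
    simp only [mem_filter, mem_neighborFinset, mem_singleton]
    refine ⟨fun ⟨hxy, hy⟩ => ?_, by rintro rfl; exact ⟨hx.symm, dist_self⟩⟩
    exact ((dist_eq_zero_iff_eq_or_not_reachable.1 hy).resolve_right
      fun h => h (hx.reachable.trans hxy.reachable)).symm
  have key := hpdr u w z (by rw [dist_eq_one_iff_adj.2 hw, dist_eq_one_iff_adj.2 hz]) 0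
  rw [hfilter w hw, hfilter z hz, sum_singleton] at key
  have := (hpos u).ne'
  have := (hpos w).ne'
  have := (hpos z).ne'
  field_simp at key
  exact key.symm

variable (G α) in
noncomputable def pseudoIntersection (u : W) (i j : ℕ) : ℝ :=
  if h : ∃ w, G.dist u w = i then
    (1 / α h.choose) * ∑ y ∈ G.neighborFinset h.choose with G.dist u y = j, α y
  else 0

theorem sum_neighborFinset_filter_dist_eq {u w : W} (hw : α w ≠ 0)
    (hpdr : PseudoDistanceRegularAround G α u) (j : ℕ) :
    ∑ y ∈ G.neighborFinset w with G.dist u y = j, α y =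
      pseudoIntersection G α u (G.dist u w) j * α w := by
  have h : ∃ z, G.dist u z = G.dist u w := ⟨w, rfl⟩
  rw [pseudoIntersection, dif_pos h, hpdr _ w h.choose_spec j]
  field_simp

theorem pseudoIntersection_eq_zero {u : W} {i j : ℕ}
    (h : ∀ w, G.dist u w = i → ∀ y, G.Adj w y → G.dist u y ≠ j) :
    pseudoIntersection G α u i j = 0 := by
  rw [pseudoIntersection]
  split_ifs with hw
  · rw [filter_false_of_mem fun y hy => h _ hw.choose_spec y ((mem_neighborFinset ..).1 hy),
      sum_empty, mul_zero]
  · rfl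

theorem pseudoIntersection_pos (hpos : ∀ v, 0 < α v) {u w y : W}
    (hpdr : PseudoDistanceRegularAround G α u) (hwy : G.Adj w y) :
    0 < pseudoIntersection G α u (G.dist u w) (G.dist u y) := by
  refine (mul_pos_iff_of_pos_right (hpos w)).1 ?_
  rw [← sum_neighborFinset_filter_dist_eq (hpos w).ne' hpdr]
  exact sum_pos (fun z _ => hpos z) ⟨y, mem_filter.2 ⟨(mem_neighborFinset ..).2 hwy, rfl⟩⟩

theorem sum_neighborFinset_eq_sum_range {M : Type*} [AddCommMonoid M] (u w : W) (f : W → M) :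
    ∑ y ∈ G.neighborFinset w, f y =
      ∑ j ∈ range (G.dist u w + 2), ∑ y ∈ G.neighborFinset w with G.dist u y = j, f y := by
  refine (sum_fiberwise_of_maps_to (fun y hy => mem_range.2 ?_) f).symm
  rcases ((mem_neighborFinset ..).1 hy).diff_dist_adj (u := u) with h | h | h <;> omega

theorem isTridiagonalArray_pseudoIntersection (hpos : ∀ v, 0 < α v) {lam : ℝ}
    (heig : (G.adjMatrix ℝ).mulVec α = lam • α) {u : W}
    (hpdr : PseudoDistanceRegularAround G α u) :
    IsTridiagonalArray (pseudoIntersection G α u) (fun i => ∃ w, G.dist u w = i) lam where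
  eq_zero_above i j hij := pseudoIntersection_eq_zero fun w hw y hwy => by
    have := hwy.diff_dist_adj (u := u); omega
  eq_zero_below i j hij := pseudoIntersection_eq_zero fun w hw y hwy => by
    have := hwy.diff_dist_adj (u := u); omega
  layer_zero := ⟨u, dist_self⟩
  layer_succ_iff i := by
    refine ⟨fun ⟨x, hx⟩ => ?_, fun h => by_contra fun hi => h ?_⟩
    · obtain ⟨z, hzx, hz⟩ := exists_adj_dist_eq_of_dist_eq_succ hx
      rw [← hx, ← hz]
      exact (pseudoIntersection_pos hpos hpdr hzx).ne'
    · exact pseudoIntersection_eq_zero fun w _ y _ hy => hi ⟨y, hy⟩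
  eq_zero_of_not_layer i j hi := pseudoIntersection_eq_zero fun w hw => absurd ⟨w, hw⟩ hi
  ne_zero_of_layer_succ i := fun ⟨x, hx⟩ => by
    obtain ⟨z, hzx, hz⟩ := exists_adj_dist_eq_of_dist_eq_succ hx
    rw [← hx, ← hz]
    exact (pseudoIntersection_pos hpos hpdr hzx.symm).ne'
  sum_eq i := fun ⟨w, hw⟩ => by
    have hrow : ∑ y ∈ G.neighborFinset w, α y = lam * α w := by
      simpa [adjMatrix_mulVec_apply] using congrFun heig w
    rw [sum_neighborFinset_eq_sum_range u, hw] at hrow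
    simp only [sum_neighborFinset_filter_dist_eq (hpos w).ne' hpdr, hw, ← sum_mul] at hrow
    exact mul_right_cancel₀ (hpos w).ne' hrow

theorem card_filter_dist_add_one_eq (hconn : G.Connected) (u v : W) :
    #{y ∈ G.neighborFinset v | G.dist u y + 1 = G.dist u v} =
      #{y ∈ G.neighborFinset v | G.dist u y = G.dist u v - 1} := by
  refine congrArg card (filter_congr fun y hy => ?_)
  have hvy := (mem_neighborFinset ..).1 hy
  have hu : G.dist u v = 0 → G.dist u y ≠ 0 := fun hv hy =>
    hvy.ne ((hconn.dist_eq_zero_iff.1 hv).symm.trans (hconn.dist_eq_zero_iff.1 hy))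
  rcases hvy.diff_dist_adj (u := u) with h | h | h <;> omega

variable [DecidableEq W] {lam : ℝ}

theorem adjMatrix_pow_apply_eq (hconn : G.Connected) (hpos : ∀ v, 0 < α v) {u : W}
    (hpdr : PseudoDistanceRegularAround G α u) (ℓ : ℕ) (w : W) :
    (G.adjMatrix ℝ ^ ℓ) u w =
      layerWalks (pseudoIntersection G α u) (α u ^ 2)⁻¹ ℓ (G.dist u w) * (α u * α w) := by
  induction ℓ generalizing w with
  | zero =>
    by_cases h : u = w
    · subst h
      have := (hpos u).ne'
      simp [layerWalks]
      field_simp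
    · simp [layerWalks, Matrix.one_apply_ne h, hconn.dist_eq_zero_iff, h]
  | succ ℓ ih =>
    rw [pow_succ, mul_adjMatrix_apply, sum_neighborFinset_eq_sum_range u, layerWalks, sum_mul]
    refine sum_congr rfl fun j _ => ?_
    calc ∑ y ∈ G.neighborFinset w with G.dist u y = j, (G.adjMatrix ℝ ^ ℓ) u y
        = ∑ y ∈ G.neighborFinset w with G.dist u y = j,
            layerWalks (pseudoIntersection G α u) (α u ^ 2)⁻¹ ℓ j * α u * α y :=
          sum_congr rfl fun y hy => by rw [ih, (mem_filter.1 hy).2, mul_assoc]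
      _ = layerWalks (pseudoIntersection G α u) (α u ^ 2)⁻¹ ℓ j * α u *
            (pseudoIntersection G α u (G.dist u w) j * α w) := by
          rw [← mul_sum, sum_neighborFinset_filter_dist_eq (hpos w).ne' hpdr]
      _ = _ := by ring

theorem layerWalks_dist_comm (hconn : G.Connected) (hpos : ∀ v, 0 < α v)
    (hpdr : ∀ u, PseudoDistanceRegularAround G α u) (ℓ : ℕ) (u v : W) :
    layerWalks (pseudoIntersection G α u) (α u ^ 2)⁻¹ ℓ (G.dist u v) =
      layerWalks (pseudoIntersection G α v) (α v ^ 2)⁻¹ ℓ (G.dist u v) := by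
  have h := adjMatrix_pow_apply_eq hconn hpos (hpdr u) ℓ v
  rw [← ((isSymm_adjMatrix G).pow ℓ).apply u v, adjMatrix_pow_apply_eq hconn hpos (hpdr v),
    dist_comm, mul_comm (α v)] at h
  exact (mul_right_cancel₀ (mul_pos (hpos u) (hpos v)).ne' h).symm

theorem layerWalks_zero_eq_of_alpha_eq (hconn : G.Connected) (hpos : ∀ v, 0 < α v)
    (heig : (G.adjMatrix ℝ).mulVec α = lam • α) (hpdr : ∀ u, PseudoDistanceRegularAround G α u)
    {u u' : W} (h : α u = α u') (ℓ : ℕ) :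
    layerWalks (pseudoIntersection G α u) (α u ^ 2)⁻¹ ℓ 0 =
      layerWalks (pseudoIntersection G α u') (α u' ^ 2)⁻¹ ℓ 0 := by
  cases ℓ with
  | zero => simp [layerWalks, h]
  | succ ℓ =>
    have hstep : ∀ x, layerWalks (pseudoIntersection G α x) (α x ^ 2)⁻¹ (ℓ + 1) 0 =
        lam * layerWalks (pseudoIntersection G α x) (α x ^ 2)⁻¹ ℓ 1 := fun x =>
      (isTridiagonalArray_pseudoIntersection hpos heig (hpdr x)).layerWalks_succ_zero
        (pseudoIntersection_eq_zero fun w hw y hwy hy => by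
          rw [← hconn.dist_eq_zero_iff.1 hw] at hwy
          exact hwy.ne (hconn.dist_eq_zero_iff.1 hy)) ℓ
    clear h
    obtain ⟨p⟩ := hconn u u'
    induction p with
    | nil => rfl
    | @cons x y _ hxy _ ih =>
      have hsym := layerWalks_dist_comm hconn hpos hpdr ℓ x y
      rw [dist_eq_one_iff_adj.2 hxy] at hsym
      rw [hstep x, hsym, ← hstep y]
      exact ih

theorem pseudoIntersection_eq_of_alpha_eq (hconn : G.Connected) (hpos : ∀ v, 0 < α v)
    (heig : (G.adjMatrix ℝ).mulVec α = lam • α) (hpdr : ∀ u, PseudoDistanceRegularAround G α u)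
    {u u' : W} (h : α u = α u') : pseudoIntersection G α u = pseudoIntersection G α u' :=
  (isTridiagonalArray_pseudoIntersection hpos heig (hpdr u)).eq_of_layerWalks_zero_eq
    (isTridiagonalArray_pseudoIntersection hpos heig (hpdr u'))
    (inv_ne_zero (pow_ne_zero 2 (hpos u).ne'))
    (by simpa only [h] using layerWalks_zero_eq_of_alpha_eq hconn hpos heig hpdr h)

theorem card_filter_dist_eq_of_alpha_eq (hconn : G.Connected) (hpos : ∀ v, 0 < α v)
    (heig : (G.adjMatrix ℝ).mulVec α = lam • α) (hpdr : ∀ u, PseudoDistanceRegularAround G α u)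
    {u u' v v' : W} (h : α u = α u') (hd : G.dist u v = G.dist u' v') (j : ℕ) :
    #{y ∈ G.neighborFinset v | G.dist u y = j} =
      #{y ∈ G.neighborFinset v' | G.dist u' y = j} := by
  set s := {y ∈ G.neighborFinset v | G.dist u y = j}
  set t := {y ∈ G.neighborFinset v' | G.dist u' y = j}
  have hnbr := alpha_eq_of_adj_of_adj hpos hpdr
  have hsum : ∑ y ∈ s, α y = ∑ y ∈ t, α y := by
    rw [sum_neighborFinset_filter_dist_eq (hpos v).ne' (hpdr u),
      sum_neighborFinset_filter_dist_eq (hpos v').ne' (hpdr u'),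
      pseudoIntersection_eq_of_alpha_eq hconn hpos heig hpdr h, hd,
      alpha_eq_of_dist_eq hnbr hconn h hd]
  rcases (s ∪ t).eq_empty_or_nonempty with hst | ⟨y₀, hy₀⟩
  · rw [union_eq_empty] at hst
    rw [hst.1, hst.2]
  have hlayer : ∀ y ∈ s ∪ t, ∃ x, α x = α u ∧ G.dist x y = j := by
    intro y hy
    rcases mem_union.1 hy with hy | hy
    · exact ⟨u, rfl, (mem_filter.1 hy).2⟩
    · exact ⟨u', h.symm, (mem_filter.1 hy).2⟩
  have hconst : ∀ y ∈ s ∪ t, α y = α y₀ := by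
    intro y hy
    obtain ⟨x, hx, hxy⟩ := hlayer y hy
    obtain ⟨x₀, hx₀, hxy₀⟩ := hlayer y₀ hy₀
    exact alpha_eq_of_dist_eq hnbr hconn (hx.trans hx₀.symm) (hxy.trans hxy₀.symm)
  rw [sum_eq_card_nsmul fun y hy => hconst y (mem_union_left t hy),
    sum_eq_card_nsmul fun y hy => hconst y (mem_union_right s hy), nsmul_eq_mul,
    nsmul_eq_mul] at hsum
  exact_mod_cast mul_right_cancel₀ (hpos y₀).ne' hsum

theorem exists_intersectionNumbers (hconn : G.Connected) (hpos : ∀ v, 0 < α v)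
    (heig : (G.adjMatrix ℝ).mulVec α = lam • α) (hpdr : ∀ u, PseudoDistanceRegularAround G α u)
    (S : Set W) (hS : ∀ u ∈ S, ∀ u' ∈ S, α u = α u') :
    ∃ a b c : ℕ → ℕ, ∀ u ∈ S, ∀ v,
      #{y ∈ G.neighborFinset v | G.dist u y = G.dist u v} = a (G.dist u v) ∧
      #{y ∈ G.neighborFinset v | G.dist u y = G.dist u v + 1} = b (G.dist u v) ∧
      #{y ∈ G.neighborFinset v | G.dist u y + 1 = G.dist u v} = c (G.dist u v) := by
  let count : S × W → ℕ → ℕ := fun p j => #{y ∈ G.neighborFinset p.2 | G.dist p.1 y = j}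
  have hcount : count.FactorsThrough fun p => G.dist p.1 p.2 := fun p q hpq => funext fun j =>
    card_filter_dist_eq_of_alpha_eq hconn hpos heig hpdr (hS _ p.1.2 _ q.1.2) hpq j
  let p := Function.extend (fun p : S × W => G.dist p.1 p.2) count 0
  refine ⟨fun i => p i i, fun i => p i (i + 1), fun i => p i (i - 1), fun u hu v => ?_⟩
  have hp : ∀ j, p (G.dist u v) j = #{y ∈ G.neighborFinset v | G.dist u y = j} :=
    congrFun (hcount.extend_apply 0 (⟨u, hu⟩, v))
  exact ⟨(hp _).symm, (hp _).symm, (card_filter_dist_add_one_eq hconn u v).trans (hp _).symm⟩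

end SimpleGraph

theorem pseudo_distance_regularised_is_dr_or_dbr_general
    (G : SimpleGraph V) [DecidableRel G.Adj] (hconn : G.Connected)
    (lam0 : ℝ) (α : V → ℝ) (hpos : ∀ v, 0 < α v)
    (heig : (G.adjMatrix ℝ).mulVec α = lam0 • α)
    (hpdr : ∀ u : V, PseudoDistanceRegularAround G α u) :
    IsDistanceRegular G ∨ IsDistanceBiregular G := by
  have hnbr := SimpleGraph.alpha_eq_of_adj_of_adj hpos hpdr
  have numbers := SimpleGraph.exists_intersectionNumbers hconn hpos heig hpdr
  by_cases hreg : ∀ x y, G.Adj x y → α x = α y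
  · have hconst : ∀ u u', α u = α u' := fun u u' => by
      obtain ⟨p⟩ := hconn u u'
      induction p with
      | nil => rfl
      | cons huv _ ih => exact (hreg _ _ huv).trans ih
    obtain ⟨a, b, c, h⟩ := numbers Set.univ fun u _ u' _ => hconst u u'
    exact .inl ⟨a, b, c, fun u v => h u trivial v⟩
  obtain ⟨x, y, hxy, hne⟩ : ∃ x y, G.Adj x y ∧ α x ≠ α y := by simpa using hreg
  have hxy_cases := SimpleGraph.alpha_eq_or_alpha_eq_of_adj hnbr hconn hxy
  obtain ⟨_, b₁, c₁, h₁⟩ := numbers {w | α w = α x} fun u hu u' hu' => hu.trans hu'.symm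
  obtain ⟨_, b₂, c₂, h₂⟩ := numbers {w | α w ≠ α x} fun u hu u' hu' =>
    ((hxy_cases u).resolve_left hu).trans ((hxy_cases u').resolve_left hu').symm
  refine .inr ⟨{w | α w = α x}, {w | α w ≠ α x}, fun v => em _,
    Set.disjoint_left.2 fun v hv₁ hv₂ => hv₂ hv₁, fun u v huv => ?_, b₁, c₁, b₂, c₂,
    fun u hu v => (h₁ u hu v).2, fun u hu v => (h₂ u hu v).2⟩
  have := SimpleGraph.alpha_eq_iff_alpha_ne_of_adj hnbr hconn hxy hne huv
  tauto

/-- **Main theorem.** Every connected graph that is pseudo-distance-regular around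
each of its vertices is either distance-regular or distance-biregular. -/
theorem pseudo_distance_regularised_is_dr_or_dbr
    (G : SimpleGraph V) [DecidableRel G.Adj] (hconn : G.Connected)
    (lam0 : ℝ) (α : V → ℝ) (hpos : ∀ v, 0 < α v)
    (heig : (G.adjMatrix ℝ).mulVec α = lam0 • α)
    (hnorm : ∑ v : V, α v ^ 2 = (Fintype.card V : ℝ))
    (hpdr : ∀ u : V, PseudoDistanceRegularAround G α u) :
    IsDistanceRegular G ∨ IsDistanceBiregular G :=
  pseudo_distance_regularised_is_dr_or_dbr_general G hconn lam0 α hpos heig hpdr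
end

section
/- If Γ is a connected bipartite (δ₁,δ₂)-biregular graph that is pseudo-distance-regular around every vertex, then all vertices in the same partite class have the same local spectrum: m_u(λ_i) = m_{u'}(λ_i) for all u, u' in the same part and all eigenvalues λ_i (Γ is 'walk-biregular'). -/
open Matrix

open Finset

/-- If a connected bipartite `(δ₁,δ₂)`-biregular graph is pseudo-distance-regular
around every vertex, then any two vertices in the same partite class have the same
local spectrum: `m_u(λ_i) = m_{u'}(λ_i)` for all `i` ("walk-biregularity"). -/
theorem walk_biregular_of_pseudo_distance_regularised
    {V : Type*} [Fintype V] [DecidableEq V]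
    (G : SimpleGraph V) [DecidableRel G.Adj] (hconn : G.Connected)
    (V₁ V₂ : Set V) (δ₁ δ₂ : ℕ)
    (hpart : ∀ v : V, (v ∈ V₁ ∨ v ∈ V₂) ∧ ¬(v ∈ V₁ ∧ v ∈ V₂))
    (hbip : ∀ u v : V, G.Adj u v → (u ∈ V₁ ∧ v ∈ V₂) ∨ (u ∈ V₂ ∧ v ∈ V₁))
    (hdeg₁ : ∀ u ∈ V₁, G.degree u = δ₁) (hdeg₂ : ∀ v ∈ V₂, G.degree v = δ₂)
    (d : ℕ) (lam : Fin (d + 1) → ℝ) (hlam : StrictAnti lam)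
    (E : Fin (d + 1) → Matrix V V ℝ)
    (hA : G.adjMatrix ℝ = ∑ i, lam i • E i)
    (hidem : ∀ i j, E i * E j = if i = j then E i else 0)
    (hsymm : ∀ i, (E i)ᵀ = E i)
    (hsum : ∑ i, E i = 1)
    (lam0 : ℝ) (α : V → ℝ) (hpos : ∀ v, 0 < α v)
    (heig : (G.adjMatrix ℝ).mulVec α = lam0 • α)
    (hpdr : ∀ u w z : V, G.dist u w = G.dist u z → ∀ j : ℕ,
      (1 / α w) * ∑ y ∈ (G.neighborFinset w).filter (fun y => G.dist u y = j), α y =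
      (1 / α z) * ∑ y ∈ (G.neighborFinset z).filter (fun y => G.dist u y = j), α y) :
    ∀ u u' : V, ((u ∈ V₁ ∧ u' ∈ V₁) ∨ (u ∈ V₂ ∧ u' ∈ V₂)) →
      ∀ i, E i u u = E i u' u' := by
  intro u u' hclass i
  have hα : ∀ v : V, α v ≠ 0 := fun v => (hpos v).ne'
  -- A^ℓ is symmetric
  have hAsym : ∀ (ℓ : ℕ) (a b : V),
      ((G.adjMatrix ℝ) ^ ℓ) a b = ((G.adjMatrix ℝ) ^ ℓ) b a := by
    intro ℓ a b
    have h : ((G.adjMatrix ℝ) ^ ℓ)ᵀ = (G.adjMatrix ℝ) ^ ℓ := by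
      rw [Matrix.transpose_pow, SimpleGraph.transpose_adjMatrix]
    conv_lhs => rw [← h]
    rfl
  -- the Perron eigenvector equation, entrywise
  have hsumN : ∀ v : V, ∑ y ∈ G.neighborFinset v, α y = lam0 * α v := by
    intro v
    have h := congrFun heig v
    simpa using h
  -- two distinct vertices with a common neighbor are at distance 2
  have hdist2 : ∀ x y v : V, G.Adj v x → G.Adj v y → x ≠ y → G.dist x y = 2 := by
    intro x y v hvx hvy hxy
    have hnadj : ¬ G.Adj x y := by
      intro hadj
      rcases hbip v x hvx with ⟨hv1, hx2⟩ | ⟨hv2, hx1⟩ <;>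
        rcases hbip v y hvy with ⟨hv1', hy2⟩ | ⟨hv2', hy1⟩ <;>
        rcases hbip x y hadj with ⟨hx1', hy2'⟩ | ⟨hx2', hy1'⟩ <;>
        first
          | exact (hpart v).2 ⟨‹v ∈ V₁›, ‹v ∈ V₂›⟩
          | exact (hpart x).2 ⟨‹x ∈ V₁›, ‹x ∈ V₂›⟩
          | exact (hpart y).2 ⟨‹y ∈ V₁›, ‹y ∈ V₂›⟩
    have h2 : G.dist x y ≤ 2 := by
      have := G.dist_le (SimpleGraph.Walk.cons hvx.symm (SimpleGraph.Walk.cons hvy SimpleGraph.Walk.nil))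
      simpa using this
    have h0 : G.dist x y ≠ 0 := fun h => hxy (hconn.dist_eq_zero_iff.mp h)
    have h1 : G.dist x y ≠ 1 := fun h => hnadj (SimpleGraph.dist_eq_one_iff_adj.mp h)
    omega
  -- two vertices with a common neighbor have the same Perron weight
  have hαeq : ∀ x y v : V, G.Adj v x → G.Adj v y → α x = α y := by
    intro x y v hvx hvy
    have hdx : G.dist v x = 1 := SimpleGraph.dist_eq_one_iff_adj.mpr hvx
    have hdy : G.dist v y = 1 := SimpleGraph.dist_eq_one_iff_adj.mpr hvy
    have h := hpdr v x y (hdx.trans hdy.symm) 0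
    have hfx : (G.neighborFinset x).filter (fun t => G.dist v t = 0) = {v} := by
      ext t
      simp only [Finset.mem_filter, SimpleGraph.mem_neighborFinset, Finset.mem_singleton,
        hconn.dist_eq_zero_iff]
      constructor
      · rintro ⟨_, h⟩; exact h.symm
      · rintro rfl; exact ⟨hvx.symm, rfl⟩
    have hfy : (G.neighborFinset y).filter (fun t => G.dist v t = 0) = {v} := by
      ext t
      simp only [Finset.mem_filter, SimpleGraph.mem_neighborFinset, Finset.mem_singleton,
        hconn.dist_eq_zero_iff]
      constructor
      · rintro ⟨_, h⟩; exact h.symm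
      · rintro rfl; exact ⟨hvy.symm, rfl⟩
    rw [hfx, hfy, Finset.sum_singleton, one_div, one_div, inv_mul_eq_div, inv_mul_eq_div,
      div_eq_div_iff (hα x) (hα y)] at h
    exact mul_left_cancel₀ (hα v) (by linarith)
  -- THE KEY CLAIM: for fixed u, (A^ℓ)_{u w} / α_w depends only on dist u w
  have claim : ∀ (ℓ : ℕ) (u w z : V), G.dist u w = G.dist u z →
      ((G.adjMatrix ℝ) ^ ℓ) u w * α z = ((G.adjMatrix ℝ) ^ ℓ) u z * α w := by
    intro ℓ
    induction ℓ with
    | zero =>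
      intro u w z hd
      by_cases hw : u = w
      · subst hw
        have hz : u = z := hconn.dist_eq_zero_iff.mp
          (by rw [← hd, SimpleGraph.dist_self])
        subst hz; rfl
      · have hz : u ≠ z := by
          intro h; subst h
          exact hw (hconn.dist_eq_zero_iff.mp (by rw [hd, SimpleGraph.dist_self]))
        simp [Matrix.one_apply, hw, hz]
    | succ ℓ ih =>
      intro u w z hd
      rw [pow_succ, SimpleGraph.mul_adjMatrix_apply, SimpleGraph.mul_adjMatrix_apply]
      have split : ∀ x : V, ∑ t ∈ G.neighborFinset x, ((G.adjMatrix ℝ) ^ ℓ) u t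
          = ∑ j ∈ Finset.image (G.dist u) Finset.univ,
              ∑ t ∈ (G.neighborFinset x).filter (fun t => G.dist u t = j),
                ((G.adjMatrix ℝ) ^ ℓ) u t :=
        fun x => (Finset.sum_fiberwise_of_maps_to
          (fun t _ => Finset.mem_image_of_mem _ (Finset.mem_univ t)) _).symm
      rw [split w, split z, Finset.sum_mul, Finset.sum_mul]
      refine Finset.sum_congr rfl (fun j _ => ?_)
      by_cases hex : ∃ t₀ : V, G.dist u t₀ = j
      · obtain ⟨t₀, ht₀⟩ := hex
        have hsw : (∑ t ∈ (G.neighborFinset w).filter (fun t => G.dist u t = j),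
            ((G.adjMatrix ℝ) ^ ℓ) u t) * α t₀
            = ((G.adjMatrix ℝ) ^ ℓ) u t₀ *
              ∑ t ∈ (G.neighborFinset w).filter (fun t => G.dist u t = j), α t := by
          rw [Finset.sum_mul, Finset.mul_sum]
          refine Finset.sum_congr rfl (fun t ht => ?_)
          exact ih u t t₀ ((Finset.mem_filter.mp ht).2.trans ht₀.symm)
        have hsz : (∑ t ∈ (G.neighborFinset z).filter (fun t => G.dist u t = j),
            ((G.adjMatrix ℝ) ^ ℓ) u t) * α t₀
            = ((G.adjMatrix ℝ) ^ ℓ) u t₀ *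
              ∑ t ∈ (G.neighborFinset z).filter (fun t => G.dist u t = j), α t := by
          rw [Finset.sum_mul, Finset.mul_sum]
          refine Finset.sum_congr rfl (fun t ht => ?_)
          exact ih u t t₀ ((Finset.mem_filter.mp ht).2.trans ht₀.symm)
        have hp : (∑ t ∈ (G.neighborFinset w).filter (fun t => G.dist u t = j), α t) * α z
            = (∑ t ∈ (G.neighborFinset z).filter (fun t => G.dist u t = j), α t) * α w := by
          have h := hpdr u w z hd j
          rw [one_div, one_div, inv_mul_eq_div, inv_mul_eq_div,
            div_eq_div_iff (hα w) (hα z)] at h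
          exact h
        apply mul_right_cancel₀ (hα t₀)
        linear_combination α z * hsw - α w * hsz + ((G.adjMatrix ℝ) ^ ℓ) u t₀ * hp
      · have e1 : (G.neighborFinset w).filter (fun t => G.dist u t = j) = ∅ :=
          Finset.filter_eq_empty_iff.mpr (fun t _ ht => hex ⟨t, ht⟩)
        have e2 : (G.neighborFinset z).filter (fun t => G.dist u t = j) = ∅ :=
          Finset.filter_eq_empty_iff.mpr (fun t _ ht => hex ⟨t, ht⟩)
        rw [e1, e2]; simp
  -- MAIN STEP: vertices with a common neighbor have the same diagonal entries of A^ℓ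
  have main2 : ∀ x y v : V, G.Adj v x → G.Adj v y → ∀ ℓ : ℕ,
      ((G.adjMatrix ℝ) ^ ℓ) x x = ((G.adjMatrix ℝ) ^ ℓ) y y := by
    intro x y v hvx hvy
    by_cases hxy : x = y
    · subst hxy; intro ℓ; rfl
    have haxy : α x = α y := hαeq x y v hvx hvy
    have hdxy : G.dist x y = 2 := hdist2 x y v hvx hvy hxy
    have hdxv : G.dist x v = 1 := SimpleGraph.dist_eq_one_iff_adj.mpr hvx.symm
    have hdyv : G.dist y v = 1 := SimpleGraph.dist_eq_one_iff_adj.mpr hvy.symm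
    have hdyx : G.dist y x = 2 := hdist2 y x v hvy hvx (Ne.symm hxy)
    have key : ∀ ℓ : ℕ, ((G.adjMatrix ℝ) ^ ℓ) x x = ((G.adjMatrix ℝ) ^ ℓ) y y ∧
        ((G.adjMatrix ℝ) ^ ℓ) x v = ((G.adjMatrix ℝ) ^ ℓ) y v := by
      intro ℓ
      induction ℓ with
      | zero =>
        constructor
        · simp [Matrix.one_apply]
        · have h1 : x ≠ v := fun h => (G.ne_of_adj hvx) h.symm
          have h2 : y ≠ v := fun h => (G.ne_of_adj hvy) h.symm
          simp [Matrix.one_apply, h1, h2]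
      | succ ℓ ih =>
        obtain ⟨ih1, ih2⟩ := ih
        -- diagonal step, for any a ∈ {x, y} with facts
        have diagstep : ∀ a : V, G.Adj v a →
            ((G.adjMatrix ℝ) ^ (ℓ + 1)) a a * α v
              = lam0 * α a * ((G.adjMatrix ℝ) ^ ℓ) a v := by
          intro a hva
          have hdav : G.dist a v = 1 := SimpleGraph.dist_eq_one_iff_adj.mpr hva.symm
          rw [pow_succ, SimpleGraph.mul_adjMatrix_apply, Finset.sum_mul]
          have hterm : ∀ t ∈ G.neighborFinset a,
              ((G.adjMatrix ℝ) ^ ℓ) a t * α v = ((G.adjMatrix ℝ) ^ ℓ) a v * α t := by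
            intro t ht
            refine claim ℓ a t v ?_
            rw [hdav, SimpleGraph.dist_eq_one_iff_adj]
            exact (SimpleGraph.mem_neighborFinset G a t).mp ht
          rw [Finset.sum_congr rfl hterm, ← Finset.mul_sum, hsumN a]
          ring
        -- off-diagonal step
        have offstep : ∀ a b : V, G.Adj v a → G.Adj v b → a ≠ b →
            ((G.adjMatrix ℝ) ^ (ℓ + 1)) a v * α b
              = ((G.adjMatrix ℝ) ^ ℓ) a a * α b
                + ((G.adjMatrix ℝ) ^ ℓ) a b * (lam0 * α v - α a) := by
          intro a b hva hvb hab
          have hdab : G.dist a b = 2 := hdist2 a b v hva hvb hab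
          have hmem : a ∈ G.neighborFinset v := (SimpleGraph.mem_neighborFinset G v a).mpr hva
          rw [pow_succ, SimpleGraph.mul_adjMatrix_apply,
            ← Finset.add_sum_erase _ _ hmem, add_mul]
          congr 1
          have hterm : ∀ t ∈ (G.neighborFinset v).erase a,
              ((G.adjMatrix ℝ) ^ ℓ) a t * α b = ((G.adjMatrix ℝ) ^ ℓ) a b * α t := by
            intro t ht
            obtain ⟨hta, htN⟩ := Finset.mem_erase.mp ht
            refine claim ℓ a t b ?_
            rw [hdab, hdist2 a t v hva ((SimpleGraph.mem_neighborFinset G v t).mp htN)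
              (Ne.symm hta)]
          rw [Finset.sum_mul, Finset.sum_congr rfl hterm, ← Finset.mul_sum]
          have herase := Finset.add_sum_erase (G.neighborFinset v) α hmem
          have : ∑ t ∈ (G.neighborFinset v).erase a, α t = lam0 * α v - α a := by
            have := hsumN v
            linarith
          rw [this]
        constructor
        · -- diagonal entries
          have ex := diagstep x hvx
          have ey := diagstep y hvy
          apply mul_right_cancel₀ (hα v)
          rw [ex, ey, ih2, haxy]
        · -- entries at v
          have ex := offstep x y hvx hvy hxy
          have ey := offstep y x hvy hvx (Ne.symm hxy)
          have hsymA : ((G.adjMatrix ℝ) ^ ℓ) x y = ((G.adjMatrix ℝ) ^ ℓ) y x := hAsym ℓ x y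
          rw [← haxy] at ex ey
          apply mul_right_cancel₀ (hα x)
          rw [ex, ih1, hsymA]
          exact ey.symm
    exact fun ℓ => (key ℓ).1
  -- CHAIN: along any walk, same-class vertices have equal diagonals
  have chain : ∀ (n : ℕ) (x y : V) (p : G.Walk x y), p.length ≤ n →
      ((x ∈ V₁ ∧ y ∈ V₁) ∨ (x ∈ V₂ ∧ y ∈ V₂)) →
      ∀ ℓ : ℕ, ((G.adjMatrix ℝ) ^ ℓ) x x = ((G.adjMatrix ℝ) ^ ℓ) y y := by
    intro n
    induction n with
    | zero =>
      intro x y p hp hs ℓ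
      have h0 : p.length = 0 := Nat.le_zero.mp hp
      have hxy : x = y := SimpleGraph.Walk.eq_of_length_eq_zero h0
      subst hxy; rfl
    | succ n ihn =>
      intro x y p hp hs ℓ
      cases p with
      | nil => rfl
      | @cons _ w₁ _ h q =>
        cases q with
        | nil =>
          -- x adjacent to y but same class: impossible
          exfalso
          rcases hbip x y h with ⟨h1, h2⟩ | ⟨h1, h2⟩ <;> rcases hs with ⟨hx, hy⟩ | ⟨hx, hy⟩ <;>
            first
              | exact (hpart x).2 ⟨‹x ∈ V₁›, ‹x ∈ V₂›⟩
              | exact (hpart y).2 ⟨‹y ∈ V₁›, ‹y ∈ V₂›⟩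
        | @cons _ w₂ _ h2 r =>
          have step1 := main2 x w₂ w₁ h.symm h2
          -- x and w₂ are in the same class
          have hsx : (x ∈ V₁ ∧ w₂ ∈ V₁) ∨ (x ∈ V₂ ∧ w₂ ∈ V₂) := by
            rcases hbip x w₁ h with ⟨hx1, hw2⟩ | ⟨hx2, hw1⟩ <;>
              rcases hbip w₁ w₂ h2 with ⟨hw1', hw₂2⟩ | ⟨hw2', hw₂1⟩
            · exact absurd ⟨hw1', hw2⟩ (hpart w₁).2
            · exact Or.inl ⟨hx1, hw₂1⟩
            · exact Or.inr ⟨hx2, hw₂2⟩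
            · exact absurd ⟨hw1, hw2'⟩ (hpart w₁).2
          -- hence w₂ and y are in the same class
          have hsy : (w₂ ∈ V₁ ∧ y ∈ V₁) ∨ (w₂ ∈ V₂ ∧ y ∈ V₂) := by
            rcases hs with ⟨hx, hy⟩ | ⟨hx, hy⟩ <;> rcases hsx with ⟨hx', hw⟩ | ⟨hx', hw⟩
            · exact Or.inl ⟨hw, hy⟩
            · exact absurd ⟨hx, hx'⟩ (hpart x).2
            · exact absurd ⟨hx', hx⟩ (hpart x).2
            · exact Or.inr ⟨hw, hy⟩
          have hlen : r.length ≤ n := by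
            simp only [SimpleGraph.Walk.length_cons] at hp
            omega
          rw [step1 ℓ, ihn w₂ y r hlen hsy ℓ]
  -- diagonal entries of all powers agree for u, u'
  obtain ⟨p⟩ := hconn.preconnected u u'
  have hdiag : ∀ ℓ : ℕ, ((G.adjMatrix ℝ) ^ ℓ) u u = ((G.adjMatrix ℝ) ^ ℓ) u' u' :=
    chain p.length u u' p le_rfl hclass
  -- spectral decomposition of powers
  have hpow : ∀ k : ℕ, (G.adjMatrix ℝ) ^ k = ∑ j, (lam j ^ k) • E j := by
    intro k
    induction k with
    | zero => simp [hsum]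
    | succ k ihk =>
      rw [pow_succ, ihk, hA, Finset.sum_mul_sum]
      have hterm : ∀ i' : Fin (d + 1),
          ∑ j, (lam i' ^ k • E i') * (lam j • E j) = lam i' ^ (k + 1) • E i' := by
        intro i'
        have : ∀ j, (lam i' ^ k • E i') * (lam j • E j)
            = (lam i' ^ k * lam j) • (if i' = j then E i' else 0) := by
          intro j
          rw [Matrix.smul_mul, Matrix.mul_smul, hidem i' j, smul_smul]
        rw [Finset.sum_congr rfl (fun j _ => this j)]
        rw [Finset.sum_eq_single i']
        · rw [if_pos rfl, pow_succ]
        · intro j _ hj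
          rw [if_neg (Ne.symm hj), smul_zero]
        · intro h; exact absurd (Finset.mem_univ i') h
      exact Finset.sum_congr rfl (fun i' _ => hterm i')
  -- the entrywise consequence and Vandermonde
  have hentry : ∀ j : Fin (d + 1),
      ∑ i', (E i' u u - E i' u' u') * lam i' ^ (j : ℕ) = 0 := by
    intro j
    have h1 := congrFun (congrFun (hpow (j : ℕ)) u) u
    have h2 := congrFun (congrFun (hpow (j : ℕ)) u') u'
    have h3 : (∑ i', (lam i' ^ (j : ℕ)) • E i') u u
        = ∑ i', lam i' ^ (j : ℕ) * E i' u u := by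
      simp [Matrix.sum_apply]
    have h4 : (∑ i', (lam i' ^ (j : ℕ)) • E i') u' u'
        = ∑ i', lam i' ^ (j : ℕ) * E i' u' u' := by
      simp [Matrix.sum_apply]
    have h5 : ∑ i', lam i' ^ (j : ℕ) * E i' u u
        = ∑ i', lam i' ^ (j : ℕ) * E i' u' u' := by
      rw [← h3, ← h4, ← h1, ← h2]
      exact hdiag (j : ℕ)
    calc ∑ i', (E i' u u - E i' u' u') * lam i' ^ (j : ℕ)
        = ∑ i', (lam i' ^ (j : ℕ) * E i' u u - lam i' ^ (j : ℕ) * E i' u' u') := by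
          refine Finset.sum_congr rfl (fun i' _ => ?_); ring
      _ = 0 := by rw [Finset.sum_sub_distrib, h5, sub_self]
  have hzero : (fun i' : Fin (d + 1) => E i' u u - E i' u' u') = 0 :=
    Matrix.eq_zero_of_forall_pow_sum_mul_pow_eq_zero hlam.injective hentry
  have := congrFun hzero i
  simpa [sub_eq_zero] using this
end
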